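/- The group given by the presentation ⟨a, b, c, z | a², b², c², z², a⁻¹z⁻¹az, b⁻¹z⁻¹bz, c⁻¹z⁻¹cz, a⁻¹b⁻¹ab·z⁻¹, b⁻¹c⁻¹bc·z⁻¹, a⁻¹c⁻¹ac·z⁻¹⟩ has exactly 16 elements. -/
import Mathlib

namespace Stmt5

def a : FreeGroup (Fin 4) := FreeGroup.of 0
def b : FreeGroup (Fin 4) := FreeGroup.of 1
def c : FreeGroup (Fin 4) := FreeGroup.of 2
def z : FreeGroup (Fin 4) := FreeGroup.of 3

def rels : Set (FreeGroup (Fin 4)) :=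
  {a ^ 2, b ^ 2, c ^ 2, z ^ 2,
   a⁻¹ * z⁻¹ * a * z, b⁻¹ * z⁻¹ * b * z, c⁻¹ * z⁻¹ * c * z,
   a⁻¹ * b⁻¹ * a * b * z⁻¹, b⁻¹ * c⁻¹ * b * c * z⁻¹, a⁻¹ * c⁻¹ * a * c * z⁻¹}

structure G where
  e : Bool
  i : Bool
  j : Bool
  k : Bool
deriving DecidableEq, Fintype

instance : Mul G where
  mul g h := ⟨xor (xor g.e h.e) (xor (h.i && g.j) (xor (h.i && g.k) (h.j && g.k))),
    xor g.i h.i, xor g.j h.j, xor g.k h.k⟩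

instance : One G where
  one := ⟨false, false, false, false⟩

instance : Inv G where
  inv g := ⟨xor g.e (xor (g.i && g.j) (xor (g.i && g.k) (g.j && g.k))), g.i, g.j, g.k⟩

set_option maxHeartbeats 2000000 in
instance : Group G where
  mul_assoc := by decide
  one_mul := by decide
  mul_one := by decide
  inv_mul_cancel := by decide

def f : Fin 4 → G := ![⟨false, true, false, false⟩, ⟨false, false, true, false⟩,
  ⟨false, false, false, true⟩, ⟨true, false, false, false⟩]

lemma hf : ∀ r ∈ rels, FreeGroup.lift f r = 1 := by
  intro r hr
  simp only [rels, Set.mem_insert_iff, Set.mem_singleton_iff] at hr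
  rcases hr with rfl | rfl | rfl | rfl | rfl | rfl | rfl | rfl | rfl | rfl <;>
    simp [a, b, c, z, f] <;> decide

abbrev P := PresentedGroup rels

def φ : P →* G := PresentedGroup.toGroup hf

def A : P := PresentedGroup.of 0
def B : P := PresentedGroup.of 1
def C : P := PresentedGroup.of 2
def Z : P := PresentedGroup.of 3

lemma relone {r : FreeGroup (Fin 4)} (hr : r ∈ rels) : PresentedGroup.mk rels r = 1 :=
  (QuotientGroup.eq_one_iff r).2 (Subgroup.subset_normalClosure hr)

lemma AA : A * A = 1 := by
  have h := relone (show a ^ 2 ∈ rels by simp [rels])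
  simpa [pow_two, map_mul, A, a, PresentedGroup.of] using h

lemma BB : B * B = 1 := by
  have h := relone (show b ^ 2 ∈ rels by simp [rels])
  simpa [pow_two, map_mul, B, b, PresentedGroup.of] using h

lemma CC : C * C = 1 := by
  have h := relone (show c ^ 2 ∈ rels by simp [rels])
  simpa [pow_two, map_mul, C, c, PresentedGroup.of] using h

lemma ZZ : Z * Z = 1 := by
  have h := relone (show z ^ 2 ∈ rels by simp [rels])
  simpa [pow_two, map_mul, Z, z, PresentedGroup.of] using h

lemma relAZ : A⁻¹ * Z⁻¹ * A * Z = 1 := by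
  have h := relone (show a⁻¹ * z⁻¹ * a * z ∈ rels by simp [rels])
  simpa [map_mul, map_inv, A, Z, a, z, PresentedGroup.of] using h

lemma relBZ : B⁻¹ * Z⁻¹ * B * Z = 1 := by
  have h := relone (show b⁻¹ * z⁻¹ * b * z ∈ rels by simp [rels])
  simpa [map_mul, map_inv, B, Z, b, z, PresentedGroup.of] using h

lemma relCZ : C⁻¹ * Z⁻¹ * C * Z = 1 := by
  have h := relone (show c⁻¹ * z⁻¹ * c * z ∈ rels by simp [rels])
  simpa [map_mul, map_inv, C, Z, c, z, PresentedGroup.of] using h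

lemma relAB : A⁻¹ * B⁻¹ * A * B * Z⁻¹ = 1 := by
  have h := relone (show a⁻¹ * b⁻¹ * a * b * z⁻¹ ∈ rels by simp [rels])
  simpa [map_mul, map_inv, A, B, Z, a, b, z, PresentedGroup.of] using h

lemma relBC : B⁻¹ * C⁻¹ * B * C * Z⁻¹ = 1 := by
  have h := relone (show b⁻¹ * c⁻¹ * b * c * z⁻¹ ∈ rels by simp [rels])
  simpa [map_mul, map_inv, B, C, Z, b, c, z, PresentedGroup.of] using h

lemma relAC : A⁻¹ * C⁻¹ * A * C * Z⁻¹ = 1 := by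
  have h := relone (show a⁻¹ * c⁻¹ * a * c * z⁻¹ ∈ rels by simp [rels])
  simpa [map_mul, map_inv, A, C, Z, a, c, z, PresentedGroup.of] using h

lemma Zinv : Z⁻¹ = Z := inv_eq_of_mul_eq_one_right ZZ
lemma Ainv : A⁻¹ = A := inv_eq_of_mul_eq_one_right AA
lemma Binv : B⁻¹ = B := inv_eq_of_mul_eq_one_right BB
lemma Cinv : C⁻¹ = C := inv_eq_of_mul_eq_one_right CC

lemma AZ : A * Z = Z * A := by
  have h := congrArg (fun x => Z * (A * x)) relAZ
  simpa [mul_assoc] using h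

lemma BZ : B * Z = Z * B := by
  have h := congrArg (fun x => Z * (B * x)) relBZ
  simpa [mul_assoc] using h

lemma CZ : C * Z = Z * C := by
  have h := congrArg (fun x => Z * (C * x)) relCZ
  simpa [mul_assoc] using h

lemma BA : B * A = A * (B * Z) := by
  have h := congrArg (fun x => B * (A * x)) relAB
  simp only [mul_assoc, inv_mul_cancel_left, mul_inv_cancel_left, mul_one, Zinv] at h
  exact h.symm

lemma CB : C * B = B * (C * Z) := by
  have h := congrArg (fun x => C * (B * x)) relBC
  simp only [mul_assoc, inv_mul_cancel_left, mul_inv_cancel_left, mul_one, Zinv] at h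
  exact h.symm

lemma CA : C * A = A * (C * Z) := by
  have h := congrArg (fun x => C * (A * x)) relAC
  simp only [mul_assoc, inv_mul_cancel_left, mul_inv_cancel_left, mul_one, Zinv] at h
  exact h.symm

lemma ZZ' (x : P) : Z * (Z * x) = x := by rw [← mul_assoc, ZZ, one_mul]
lemma AA' (x : P) : A * (A * x) = x := by rw [← mul_assoc, AA, one_mul]
lemma BB' (x : P) : B * (B * x) = x := by rw [← mul_assoc, BB, one_mul]
lemma CC' (x : P) : C * (C * x) = x := by rw [← mul_assoc, CC, one_mul]
lemma AZ' (x : P) : A * (Z * x) = Z * (A * x) := by rw [← mul_assoc, AZ, mul_assoc]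
lemma BZ' (x : P) : B * (Z * x) = Z * (B * x) := by rw [← mul_assoc, BZ, mul_assoc]
lemma CZ' (x : P) : C * (Z * x) = Z * (C * x) := by rw [← mul_assoc, CZ, mul_assoc]
lemma BA' (x : P) : B * (A * x) = A * (B * (Z * x)) := by
  rw [← mul_assoc, BA, mul_assoc, mul_assoc]
lemma CA' (x : P) : C * (A * x) = A * (C * (Z * x)) := by
  rw [← mul_assoc, CA, mul_assoc, mul_assoc]
lemma CB' (x : P) : C * (B * x) = B * (C * (Z * x)) := by
  rw [← mul_assoc, CB, mul_assoc, mul_assoc]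

def s : G → P := fun g =>
  (cond g.e Z 1) * ((cond g.i A 1) * ((cond g.j B 1) * (cond g.k C 1)))

lemma stepZ (g : G) : Z * s g = s ⟨!g.e, g.i, g.j, g.k⟩ := by
  obtain ⟨e, i, j, k⟩ := g
  cases e <;> cases i <;> cases j <;> cases k <;>
    simp [s, ZZ, AA, BB, CC, AZ, BZ, CZ, BA, CA, CB,
      ZZ', AA', BB', CC', AZ', BZ', CZ', BA', CA', CB']

lemma stepA (g : G) : A * s g = s ⟨g.e, !g.i, g.j, g.k⟩ := by
  obtain ⟨e, i, j, k⟩ := g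
  cases e <;> cases i <;> cases j <;> cases k <;>
    simp [s, ZZ, AA, BB, CC, AZ, BZ, CZ, BA, CA, CB,
      ZZ', AA', BB', CC', AZ', BZ', CZ', BA', CA', CB']

lemma stepB (g : G) : B * s g = s ⟨xor g.e g.i, g.i, !g.j, g.k⟩ := by
  obtain ⟨e, i, j, k⟩ := g
  cases e <;> cases i <;> cases j <;> cases k <;>
    simp [s, ZZ, AA, BB, CC, AZ, BZ, CZ, BA, CA, CB,
      ZZ', AA', BB', CC', AZ', BZ', CZ', BA', CA', CB']

lemma stepC (g : G) : C * s g = s ⟨xor g.e (xor g.i g.j), g.i, g.j, !g.k⟩ := by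
  obtain ⟨e, i, j, k⟩ := g
  cases e <;> cases i <;> cases j <;> cases k <;>
    simp [s, ZZ, AA, BB, CC, AZ, BZ, CZ, BA, CA, CB,
      ZZ', AA', BB', CC', AZ', BZ', CZ', BA', CA', CB']

lemma s_surj : ∀ x : P, ∃ g : G, s g = x := by
  intro x
  have hx : x ∈ Subgroup.closure (Set.range (PresentedGroup.of : Fin 4 → P)) := by
    rw [PresentedGroup.closure_range_of]; trivial
  refine Subgroup.closure_induction_left (p := fun y _ => ∃ g : G, s g = y) ?_ ?_ ?_ hx
  · exact ⟨⟨false, false, false, false⟩, by simp [s]⟩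
  · rintro u ⟨t, rfl⟩ y hy ⟨g, rfl⟩
    fin_cases t
    · exact ⟨_, (stepA g).symm⟩
    · exact ⟨_, (stepB g).symm⟩
    · exact ⟨_, (stepC g).symm⟩
    · exact ⟨_, (stepZ g).symm⟩
  · rintro u ⟨t, rfl⟩ y hy ⟨g, rfl⟩
    fin_cases t
    · exact ⟨⟨g.e, !g.i, g.j, g.k⟩, by
        show s _ = A⁻¹ * s g; rw [Ainv]; exact (stepA g).symm⟩
    · exact ⟨⟨xor g.e g.i, g.i, !g.j, g.k⟩, by
        show s _ = B⁻¹ * s g; rw [Binv]; exact (stepB g).symm⟩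
    · exact ⟨⟨xor g.e (xor g.i g.j), g.i, g.j, !g.k⟩, by
        show s _ = C⁻¹ * s g; rw [Cinv]; exact (stepC g).symm⟩
    · exact ⟨⟨!g.e, g.i, g.j, g.k⟩, by
        show s _ = Z⁻¹ * s g; rw [Zinv]; exact (stepZ g).symm⟩

lemma phiA : φ A = f 0 := PresentedGroup.toGroup.of hf
lemma phiB : φ B = f 1 := PresentedGroup.toGroup.of hf
lemma phiC : φ C = f 2 := PresentedGroup.toGroup.of hf
lemma phiZ : φ Z = f 3 := PresentedGroup.toGroup.of hf

lemma phis (g : G) : φ (s g) = g := by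
  obtain ⟨e, i, j, k⟩ := g
  cases e <;> cases i <;> cases j <;> cases k <;>
    simp [s, map_mul, phiA, phiB, phiC, phiZ, f] <;> decide

/-- The group presented by
`⟨a,b,c,z ∣ a²,b²,c²,z²,[a,z],[b,z],[c,z],[a,b]z⁻¹,[b,c]z⁻¹,[a,c]z⁻¹⟩` has order 16. -/
theorem statement5 : Nat.card (PresentedGroup rels) = 16 := by
  have hbij : Function.Bijective φ := by
    constructor
    · intro x y h
      obtain ⟨gx, rfl⟩ := s_surj x
      obtain ⟨gy, rfl⟩ := s_surj y
      rw [phis, phis] at h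
      rw [h]
    · intro g
      exact ⟨s g, phis g⟩
  have : Nat.card (PresentedGroup rels) = Nat.card G := Nat.card_eq_of_bijective φ hbij
  rw [this, Nat.card_eq_fintype_card]
  decide

end Stmt5
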